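/- Let [p^n](z) = α_n β^{p^n−1} z^{p^n} + ⋯ ∈ O[[z^{p^n}]] be the multiplication-by-p^n series on a height-1 formal group over a characteristic-p complete discrete valuation ring O, where α_n = α^{(p^n−1)/(p−1)}. Then its compositional inverse is [p^n]^{-1}(z) = (1/β)(β/α_n)^{1/p^n} z^{1/p^n} + ⋯ ∈ O^{1/p^n}[[z^{1/p^n}]], and ([p^n]^{-1}(z))^{p^n} ∈ O[[z]]. -/

import Mathlib

open PowerSeries

/-- Composition `f ∘ g` of power series (substituting `g`, assumed to have zero constant
term, into `f`). -/
noncomputable def pscomp {R : Type*} [CommRing R] (f g : PowerSeries R) : PowerSeries R :=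
  PowerSeries.mk fun n =>
    PowerSeries.coeff n (Polynomial.eval₂ (PowerSeries.C) g (PowerSeries.trunc (n + 1) f))

/-!
The series `F(z) = Σ coeff (pⁿ j) μ · zʲ` satisfies `μ = F(z^{pⁿ})`, and its linear
coefficient `αₙ β^{pⁿ-1}` is a unit, so `F` has a two-sided compositional inverse `G`
(`PowerSeries.substInvOfIsUnit`, once `pscomp` is identified with `PowerSeries.subst`).
Then `G ∘ μ = (G ∘ F)(z^{pⁿ}) = z^{pⁿ}` by associativity of substitution.
-/

namespace PowerSeries

variable {R : Type*} [CommRing R]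

theorem coeff_pow_of_lt_of_constantCoeff_eq_zero {g : R⟦X⟧} (hg : constantCoeff g = 0)
    {k d : ℕ} (hk : k < d) : coeff k (g ^ d) = 0 :=
  coeff_of_lt_order _ <| (Nat.cast_lt.mpr hk).trans_le (le_order_pow_of_constantCoeff_eq_zero d hg)

theorem pscomp_eq_subst (f : R⟦X⟧) {g : R⟦X⟧} (hg : constantCoeff g = 0) :
    pscomp f g = f.subst g := by
  ext k
  rw [pscomp, coeff_mk, eval₂_trunc_eq_sum_range, map_sum,
    coeff_subst' (HasSubst.of_constantCoeff_zero' hg),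
    finsum_eq_sum_of_support_subset (s := Finset.range (k + 1))]
  · simp only [coeff_C_mul, smul_eq_mul]
  · intro d hd
    by_contra hdk
    exact hd (by
      simp only [coeff_pow_of_lt_of_constantCoeff_eq_zero hg (by simpa using hdk), smul_zero])

theorem subst_X_pow_mk_coeff_mul {q : ℕ} (hq : q ≠ 0) {μ : R⟦X⟧}
    (hμ : ∀ j, ¬ q ∣ j → coeff j μ = 0) :
    (mk fun j => coeff (q * j) μ).subst (X ^ q) = μ := by
  ext k
  rw [coeff_subst_X_pow hq]
  split_ifs with h
  · simp [Nat.mul_div_cancel' h]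
  · exact (hμ k h).symm

end PowerSeries

theorem inverse_of_mul_p_pow_n_general {p : ℕ} (hp : p.Prime)
    {O : Type*} [CommRing O]
    (n : ℕ) (α β : Oˣ) (μ : PowerSeries O)
    (hform : ∀ j : ℕ, ¬ p ^ n ∣ j → PowerSeries.coeff j μ = 0)
    (h0 : PowerSeries.constantCoeff μ = 0)
    (hlead : PowerSeries.coeff (p ^ n) μ =
      ((α ^ ((p ^ n - 1) / (p - 1)) : Oˣ) : O) * (β : O) ^ (p ^ n - 1)) :
    ∃ G : PowerSeries O,
      PowerSeries.constantCoeff G = 0 ∧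
      PowerSeries.coeff 1 G *
        (((α ^ ((p ^ n - 1) / (p - 1)) : Oˣ) : O) * (β : O) ^ (p ^ n - 1)) = 1 ∧
      pscomp (PowerSeries.mk fun j => PowerSeries.coeff (p ^ n * j) μ) G = PowerSeries.X ∧
      pscomp G μ = PowerSeries.X ^ (p ^ n) := by
  set F : PowerSeries O := mk fun j => coeff (p ^ n * j) μ
  have hq : p ^ n ≠ 0 := pow_ne_zero n hp.ne_zero
  have hF0 : constantCoeff F = 0 := by
    rw [← coeff_zero_eq_constantCoeff_apply, coeff_mk, mul_zero,
      coeff_zero_eq_constantCoeff_apply, h0]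
  have hF1_eq :
      coeff 1 F = ((α ^ ((p ^ n - 1) / (p - 1)) : Oˣ) : O) * (β : O) ^ (p ^ n - 1) := by
    rw [coeff_mk, mul_one, hlead]
  have hF1 : IsUnit (coeff 1 F) := hF1_eq ▸ (Units.isUnit _).mul ((Units.isUnit β).pow _)
  set G := F.substInvOfIsUnit hF1
  have hG0 : constantCoeff G = 0 := constantCoeff_substInvOfIsUnit F hF1
  refine ⟨G, hG0, ?_, ?_, ?_⟩
  · rw [coeff_one_substInvOfIsUnit, ← hF1_eq]
    exact hF1.unit.inv_mul
  · rw [pscomp_eq_subst F hG0, subst_substInvOfIsUnit_right F hF0 hF1]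
  · rw [pscomp_eq_subst G h0, ← subst_X_pow_mk_coeff_mul hq hform,
      ← subst_comp_subst_apply (HasSubst.of_constantCoeff_zero' hF0) (HasSubst.X_pow hq),
      subst_substInvOfIsUnit_left F hF0 hF1, subst_X (HasSubst.X_pow hq)]

/-- Let `[pⁿ](z) = αₙ β^{pⁿ-1} z^{pⁿ} + ⋯ ∈ O[[z^{pⁿ}]]` (here the series
`μ`) be the multiplication-by-`pⁿ` series on a height-one formal group over a complete
discrete valuation ring `O` of characteristic `p > 2`, where `αₙ = α^{(pⁿ-1)/(p-1)}` and
`α, β ∈ O^×`.  Then its compositional inverse `[pⁿ]⁻¹(z) = (1/β)(β/αₙ)^{1/pⁿ} z^{1/pⁿ} + ⋯`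
exists in `O^{1/pⁿ}[[z^{1/pⁿ}]]`, and `([pⁿ]⁻¹(z))^{pⁿ} ∈ O[[z]]`.  In characteristic `p`
the fractional-power series `[pⁿ]⁻¹` is faithfully encoded by its `pⁿ`-th power
`G = ([pⁿ]⁻¹)^{pⁿ} = Σ bᵢ^{pⁿ} zⁱ`, which has coefficients in `O` (this is the last claim);
writing `μ = F(z^{pⁿ})`, the inverse property `μ([pⁿ]⁻¹(z)) = z` reads `F ∘ G = z`, the
property `[pⁿ]⁻¹(μ(z)) = z` reads `G ∘ μ = z^{pⁿ}`, and the leading coefficient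
`b₁ = (1/β)(β/αₙ)^{1/pⁿ}` reads `(coeff 1 G)·(αₙ β^{pⁿ-1}) = b₁^{pⁿ}·(αₙ β^{pⁿ-1}) = 1`. -/
theorem inverse_of_mul_p_pow_n {p : ℕ} (hp : p.Prime) (hodd : p ≠ 2)
    {O : Type*} [CommRing O] [IsDomain O] [IsDiscreteValuationRing O] [CharP O p]
    (n : ℕ) (hn : 1 ≤ n) (α β : Oˣ) (μ : PowerSeries O)
    (hform : ∀ j : ℕ, ¬ p ^ n ∣ j → PowerSeries.coeff j μ = 0)
    (h0 : PowerSeries.constantCoeff μ = 0)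
    (hlead : PowerSeries.coeff (p ^ n) μ =
      ((α ^ ((p ^ n - 1) / (p - 1)) : Oˣ) : O) * (β : O) ^ (p ^ n - 1)) :
    ∃ G : PowerSeries O,
      PowerSeries.constantCoeff G = 0 ∧
      PowerSeries.coeff 1 G *
        (((α ^ ((p ^ n - 1) / (p - 1)) : Oˣ) : O) * (β : O) ^ (p ^ n - 1)) = 1 ∧
      pscomp (PowerSeries.mk fun j => PowerSeries.coeff (p ^ n * j) μ) G = PowerSeries.X ∧
      pscomp G μ = PowerSeries.X ^ (p ^ n) :=
  inverse_of_mul_p_pow_n_general hp n α β μ hform h0 hlead
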